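/- arXiv:1011.1591 — 4 statements merged into one kernel-verified Lean document; each statement's English description precedes it below -/
import Mathlib

section
/- Let f, g be continuously differentiable real functions on a neighborhood of the origin in ℝ² with g nonzero away from the origin, let q = f/g, let h'' = y(g ∂f/∂x − f ∂g/∂x) − x(g ∂f/∂y − f ∂g/∂y), and let X = {(x,y) ≠ (0,0) : h''(x,y) = 0}. Then lim_{(x,y)→(0,0)} q(x,y) = L exists if and only if for every ε > 0 there exists δ > 0 such that |q(x,y) − L| < ε for all (x,y) ∈ X with |(x,y)| < δ. -/
/-!
On every circle `x² + y² = r²` the quotient `q = f / g` is continuous, so it attains its minimum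
and maximum there, and these bound `q` on the whole circle. At such an extremum the derivative of
`q` along the rotation curve through the point vanishes, which is exactly the equation
`h'' = 0`. Hence `q` is squeezed, circle by circle, between two of its values on `X`.
-/

open Real

/-- Euclidean, whereas the norm of `ℝ × ℝ` is the sup norm: hence the factor `2` in
`norm_le_of_mem_circleThrough`. -/
def circleThrough (p : ℝ × ℝ) : Set (ℝ × ℝ) := {x | x.1 ^ 2 + x.2 ^ 2 = p.1 ^ 2 + p.2 ^ 2}

lemma circleThrough_eq_of_mem {p x : ℝ × ℝ} (hx : x ∈ circleThrough p) :
    circleThrough x = circleThrough p := by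
  simp only [circleThrough, Set.mem_ofPred_eq] at hx ⊢
  rw [hx]

lemma norm_le_of_mem_circleThrough {p x : ℝ × ℝ} (hx : x ∈ circleThrough p) :
    ‖x‖ ≤ 2 * ‖p‖ := by
  have hx : x.1 ^ 2 + x.2 ^ 2 = p.1 ^ 2 + p.2 ^ 2 := hx
  have hp₁ : p.1 ^ 2 ≤ ‖p‖ ^ 2 := by
    simpa using pow_le_pow_left₀ (norm_nonneg _) (norm_fst_le p) 2
  have hp₂ : p.2 ^ 2 ≤ ‖p‖ ^ 2 := by
    simpa using pow_le_pow_left₀ (norm_nonneg _) (norm_snd_le p) 2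
  have hp : 0 ≤ 2 * ‖p‖ := by positivity
  rw [Prod.norm_def, Real.norm_eq_abs, Real.norm_eq_abs]
  exact max_le (abs_le_of_sq_le_sq (by nlinarith [sq_nonneg x.2]) hp)
    (abs_le_of_sq_le_sq (by nlinarith [sq_nonneg x.1]) hp)

lemma isCompact_circleThrough (p : ℝ × ℝ) : IsCompact (circleThrough p) :=
  (isCompact_closedBall (0 : ℝ × ℝ) (2 * ‖p‖)).of_isClosed_subset
    (isClosed_eq (by fun_prop) continuous_const)
    fun _ hx => mem_closedBall_zero_iff.2 (norm_le_of_mem_circleThrough hx)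

lemma ne_zero_of_mem_circleThrough {p x : ℝ × ℝ} (hp : p ≠ 0) (hx : x ∈ circleThrough p) :
    x ≠ 0 := by
  rintro rfl
  have hx : 0 = p.1 ^ 2 + p.2 ^ 2 := by simpa [circleThrough] using hx
  have hp₁ : p.1 = 0 := pow_eq_zero_iff two_ne_zero |>.1 (by nlinarith [sq_nonneg p.2])
  have hp₂ : p.2 = 0 := pow_eq_zero_iff two_ne_zero |>.1 (by nlinarith [sq_nonneg p.1])
  exact hp (Prod.ext hp₁ hp₂)

noncomputable def rotateBy (t : ℝ) (a : ℝ × ℝ) : ℝ × ℝ :=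
  (a.1 * cos t - a.2 * sin t, a.1 * sin t + a.2 * cos t)

@[simp]
lemma rotateBy_zero (a : ℝ × ℝ) : rotateBy 0 a = a := by
  simp [rotateBy]

lemma rotateBy_mem_circleThrough (t : ℝ) (a : ℝ × ℝ) : rotateBy t a ∈ circleThrough a := by
  simp only [circleThrough, rotateBy, Set.mem_ofPred_eq]
  linear_combination (a.1 ^ 2 + a.2 ^ 2) * sin_sq_add_cos_sq t

lemma hasDerivAt_rotateBy (a : ℝ × ℝ) : HasDerivAt (fun t => rotateBy t a) (-a.2, a.1) 0 := by
  refine HasDerivAt.prodMk ?_ ?_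
  · simpa using ((hasDerivAt_cos 0).const_mul a.1).fun_sub ((hasDerivAt_sin 0).const_mul a.2)
  · simpa using ((hasDerivAt_sin 0).const_mul a.1).fun_add ((hasDerivAt_cos 0).const_mul a.2)

lemma ContinuousLinearMap.apply_prod_eq (φ : ℝ × ℝ →L[ℝ] ℝ) (x y : ℝ) :
    φ (x, y) = x * φ (1, 0) + y * φ (0, 1) := by
  rw [← smul_eq_mul, ← smul_eq_mul, ← map_smul, ← map_smul, ← map_add]
  simp

/-- The function `h''`: with the angular derivative `∂θ = x ∂y - y ∂x`, it equals
`-(g ∂θ f - f ∂θ g) = -g² ∂θ (f / g)`. -/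
noncomputable def angularWronskian (f g : ℝ × ℝ → ℝ) (p : ℝ × ℝ) : ℝ :=
  p.2 * (g p * fderiv ℝ f p (1, 0) - f p * fderiv ℝ g p (1, 0)) -
    p.1 * (g p * fderiv ℝ f p (0, 1) - f p * fderiv ℝ g p (0, 1))

lemma angularWronskian_eq_zero_of_isExtrOn {f g : ℝ × ℝ → ℝ} {a : ℝ × ℝ}
    (hf : DifferentiableAt ℝ f a) (hg : DifferentiableAt ℝ g a) (hga : g a ≠ 0)
    (hext : IsExtrOn (fun x => f x / g x) (circleThrough a) a) :
    angularWronskian f g a = 0 := by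
  have hF :=
    hf.hasFDerivAt.comp_hasDerivAt_of_eq 0 (hasDerivAt_rotateBy a) (rotateBy_zero a).symm
  have hG :=
    hg.hasFDerivAt.comp_hasDerivAt_of_eq 0 (hasDerivAt_rotateBy a) (rotateBy_zero a).symm
  have hQ := hF.div hG (by simpa using hga)
  have hloc : IsLocalExtr (fun t => f (rotateBy t a) / g (rotateBy t a)) 0 :=
    (hext.comp_mapsTo (fun t _ => rotateBy_mem_circleThrough t a) (rotateBy_zero a)).isLocalExtr
      Filter.univ_mem
  have hnum := hloc.hasDerivAt_eq_zero hQ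
  simp only [Function.comp_apply, rotateBy_zero, div_eq_zero_iff, hga, ne_eq, not_false_eq_true,
    pow_eq_zero_iff, or_false, OfNat.ofNat_ne_zero] at hnum
  rw [(fderiv ℝ f a).apply_prod_eq, (fderiv ℝ g a).apply_prod_eq] at hnum
  unfold angularWronskian
  linear_combination -hnum

lemma IsCompact.abs_sub_lt_of_forall_isExtrOn {α : Type*} [TopologicalSpace α] {S : Set α}
    {q : α → ℝ} {p : α} {L ε : ℝ} (hS : IsCompact S) (hq : ContinuousOn q S) (hp : p ∈ S)
    (h : ∀ c ∈ S, IsExtrOn q S c → |q c - L| < ε) : |q p - L| < ε := by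
  obtain ⟨a, haS, hmin⟩ := hS.exists_isMinOn ⟨p, hp⟩ hq
  obtain ⟨b, hbS, hmax⟩ := hS.exists_isMaxOn ⟨p, hp⟩ hq
  have ha := h a haS hmin.isExtr
  have hb := h b hbS hmax.isExtr
  have hap := isMinOn_iff.1 hmin p hp
  have hpb := isMaxOn_iff.1 hmax p hp
  rw [abs_sub_lt_iff] at ha hb ⊢
  constructor <;> linarith

/-- Let `f, g` be continuously differentiable on a neighborhood of the origin in
`ℝ²` with `g` nonzero away from the origin, `q = f/g`,
`h'' = y(g ∂f/∂x − f ∂g/∂x) − x(g ∂f/∂y − f ∂g/∂y)`, and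
`X = {(x,y) ≠ 0 : h''(x,y) = 0}`. Then `lim_{(x,y)→(0,0)} q = L` iff for every `ε > 0` there is
`δ > 0` with `|q p − L| < ε` for all `p ∈ X`, `‖p‖ < δ`. -/
theorem stmt2 (f g : ℝ × ℝ → ℝ) (U : Set (ℝ × ℝ)) (hU : IsOpen U) (h0U : (0 : ℝ × ℝ) ∈ U)
    (hf : ContDiffOn ℝ 1 f U) (hg : ContDiffOn ℝ 1 g U)
    (hg0 : ∀ p ∈ U, p ≠ 0 → g p ≠ 0) (L : ℝ) :
    (∀ ε > 0, ∃ δ > 0, ∀ p : ℝ × ℝ, p ≠ 0 → ‖p‖ < δ → |f p / g p - L| < ε) ↔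
    (∀ ε > 0, ∃ δ > 0, ∀ p : ℝ × ℝ, p ≠ 0 →
      (p.2 * (g p * fderiv ℝ f p (1, 0) - f p * fderiv ℝ g p (1, 0)) -
       p.1 * (g p * fderiv ℝ f p (0, 1) - f p * fderiv ℝ g p (0, 1)) = 0) →
      ‖p‖ < δ → |f p / g p - L| < ε) := by
  refine ⟨fun h ε hε => ?_, fun h ε hε => ?_⟩
  · obtain ⟨δ, hδ, hq⟩ := h ε hε
    exact ⟨δ, hδ, fun p hp _ hpδ => hq p hp hpδ⟩
  obtain ⟨δ, hδ, hq⟩ := h ε hε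
  obtain ⟨ρ, hρ, hball⟩ := Metric.isOpen_iff.1 hU 0 h0U
  refine ⟨min δ ρ / 2, by positivity, fun p hp hpδ => ?_⟩
  have hsmall : ∀ x ∈ circleThrough p, ‖x‖ < min δ ρ := fun x hx => by
    linarith [norm_le_of_mem_circleThrough hx]
  have hU' : ∀ x ∈ circleThrough p, x ∈ U := fun x hx =>
    hball (mem_ball_zero_iff.2 ((hsmall x hx).trans_le (min_le_right _ _)))
  have hg' : ∀ x ∈ circleThrough p, g x ≠ 0 := fun x hx =>
    hg0 x (hU' x hx) (ne_zero_of_mem_circleThrough hp hx)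
  refine (isCompact_circleThrough p).abs_sub_lt_of_forall_isExtrOn
    ((hf.continuousOn.mono hU').div (hg.continuousOn.mono hU') hg') rfl fun c hc hext => ?_
  have hcU := hU.mem_nhds (hU' c hc)
  refine hq c (ne_zero_of_mem_circleThrough hp hc) ?_ ((hsmall c hc).trans_le (min_le_left _ _))
  refine angularWronskian_eq_zero_of_isExtrOn
    ((hf.differentiableOn one_ne_zero).differentiableAt hcU)
    ((hg.differentiableOn one_ne_zero).differentiableAt hcU) (hg' c hc) ?_
  rwa [circleThrough_eq_of_mem hc]
end

section
/- Let h(x,y) = yᵈ + h₁(x)y^{d−1} + ⋯ + h_d(x) be a monic polynomial with coefficients h_i(x) ∈ ℂ[[x]]. Then there exists a positive integer n and power series σ₁, …, σ_d ∈ ℂ[[t]] such that h(tⁿ, y) = (y − σ₁(t))⋯(y − σ_d(t)) in ℂ[[t]][y]. -/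
/-!
Induction on `d`. A Tschirnhaus shift `y ↦ y - h₁/d` makes the coefficient of `y^{d-1}` vanish.
Unless the shifted polynomial is `yᵈ`, a Newton polygon step (substitute `t ↦ tˢ` and rescale
`y ↦ tʳ y`, where `r/s` is the least slope `ord hₖ / (d - k)`) gives a monic polynomial of the
same degree whose reduction mod `t` is trace-free and not `yᵈ`, hence has two distinct roots in
the algebraically closed residue field. Hensel's lemma lifts the resulting coprime factorisation,
and both factors split after a further substitution `t ↦ tᵐ` by induction.
-/

open Polynomial PowerSeries

/-- The substitution `x ↦ xⁿ` on formal power series: `(substPow n f)` is `f(xⁿ)`. -/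
noncomputable def substPow {R : Type*} [Semiring R] (n : ℕ) (f : PowerSeries R) :
    PowerSeries R :=
  PowerSeries.mk fun m => if n ∣ m then PowerSeries.coeff (m / n) f else 0

/-- The substitution `x ↦ xⁿ` applied to each coefficient of a polynomial over power series:
`P(x,y) ↦ P(xⁿ, y)`. -/
noncomputable def substPowPoly {R : Type*} [CommSemiring R] (n : ℕ)
    (P : Polynomial (PowerSeries R)) : Polynomial (PowerSeries R) :=
  ∑ k ∈ Finset.range (P.natDegree + 1), Polynomial.C (substPow n (P.coeff k)) * Polynomial.X ^ k

theorem substPow_eq_expand {R : Type*} [CommRing R] {n : ℕ} (hn : n ≠ 0) (f : R⟦X⟧) :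
    substPow n f = PowerSeries.expand n hn f := by
  ext m
  rw [PowerSeries.coeff_expand, substPow, coeff_mk]

theorem substPowPoly_eq_map_expand {R : Type*} [CommRing R] {n : ℕ} (hn : n ≠ 0) (P : R⟦X⟧[X]) :
    substPowPoly n P = P.map (PowerSeries.expand n hn).toRingHom := by
  simp only [substPowPoly, substPow_eq_expand hn, Polynomial.map, eval₂_eq_sum_range]
  rfl

theorem PowerSeries.X_pow_dvd_iff_le_order {R : Type*} [CommRing R] {n : ℕ} {φ : R⟦X⟧} :
    X ^ n ∣ φ ↔ (n : ℕ∞) ≤ φ.order := by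
  rw [order_eq_emultiplicity_X, pow_dvd_iff_le_emultiplicity]

theorem exists_min_slope {d : ℕ} (e : ℕ → ℕ∞) (h : ∃ k < d, e k ≠ ⊤) :
    ∃ k₀ < d, ∃ r : ℕ, e k₀ = r ∧ ∀ k < d, ((r * (d - k) : ℕ) : ℕ∞) ≤ (d - k₀ : ℕ) * e k := by
  classical
  obtain ⟨k, hk, hek⟩ := h
  obtain ⟨k₀, hk₀S, hmin⟩ := ((Finset.range d).filter (fun k => e k ≠ ⊤)).exists_min_image
    (fun k => ((e k).toNat : ℚ) / (d - k : ℕ)) ⟨k, by simp [hk, hek]⟩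
  simp only [Finset.mem_filter, Finset.mem_range] at hk₀S hmin
  refine ⟨k₀, hk₀S.1, (e k₀).toNat, (ENat.natCast_toNat hk₀S.2).symm, fun k hk => ?_⟩
  rcases eq_or_ne (e k) ⊤ with htop | hfin
  · rw [htop, ENat.mul_top (by exact_mod_cast (by omega : d - k₀ ≠ 0))]
    exact le_top
  · have hle : (e k₀).toNat * (d - k) ≤ (d - k₀) * (e k).toNat := by
      have := hmin k ⟨hk, hfin⟩
      rw [div_le_div_iff₀ (by exact_mod_cast (by omega : 0 < d - k₀))
        (by exact_mod_cast (by omega : 0 < d - k))] at this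
      rw [mul_comm (d - k₀)]
      exact_mod_cast this
    rw [← ENat.natCast_toNat hfin]
    exact_mod_cast hle

namespace Polynomial

theorem Splits.exists_eq_prod_fin {R : Type*} [CommRing R] [IsDomain R] {p : R[X]} {d : ℕ}
    (hp : p.Splits) (hm : p.Monic) (hd : p.natDegree = d) :
    ∃ σ : Fin d → R, p = ∏ i, (X - C (σ i)) := by
  have hlen : p.roots.toList.length = d := by
    rw [Multiset.length_toList, splits_iff_card_roots.mp hp, hd]
  subst hlen
  refine ⟨fun i => p.roots.toList[i.1], ?_⟩
  rw [Fin.prod_univ_fun_getElem p.roots.toList (X - C ·), ← Multiset.prod_coe, ← Multiset.map_coe,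
    Multiset.coe_toList]
  exact hp.eq_prod_roots_of_monic hm

theorem Monic.nextCoeff_taylor {R : Type*} [CommRing R] {p : R[X]} (hp : p.Monic) (c : R) :
    (taylor c p).nextCoeff = p.nextCoeff + p.natDegree * c := by
  rcases Nat.eq_zero_or_pos p.natDegree with hd | hd
  · simp [nextCoeff, natDegree_taylor, hd]
  rw [nextCoeff_of_natDegree_pos (by rwa [natDegree_taylor]), nextCoeff_of_natDegree_pos hd,
    natDegree_taylor, taylor_coeff, eval_eq_sum_range' (n := 2)]
  · have hd' : 1 + (p.natDegree - 1) = p.natDegree := by omega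
    simp [hasseDeriv_coeff, Finset.sum_range_succ, hd', hp.coeff_natDegree, Nat.choose_symm hd]
  · exact (natDegree_hasseDeriv_le p _).trans_lt (by omega)

theorem Monic.exists_nextCoeff_taylor_eq_zero {R : Type*} [CommRing R] [Algebra ℚ R] {p : R[X]}
    (hp : p.Monic) : ∃ c, (taylor c p).nextCoeff = 0 := by
  refine ⟨-((p.natDegree : ℚ)⁻¹ • p.nextCoeff), ?_⟩
  rw [hp.nextCoeff_taylor]
  rcases eq_or_ne p.natDegree 0 with hd | hd
  · simp [nextCoeff, hd]
  rw [mul_neg, ← nsmul_eq_mul, ← Nat.cast_smul_eq_nsmul ℚ, smul_smul,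
    mul_inv_cancel₀ (Nat.cast_ne_zero.mpr hd), one_smul, add_neg_cancel]

theorem Monic.exists_mem_roots_ne_of_nextCoeff_eq_zero {K : Type*} [Field K] [IsAlgClosed K]
    [CharZero K] {p : K[X]} (hp : p.Monic) (hnext : p.nextCoeff = 0)
    (hX : p ≠ X ^ p.natDegree) : ∃ a ∈ p.roots, ∃ b ∈ p.roots, a ≠ b := by
  by_contra! hall
  have hsplit : p.Splits := IsAlgClosed.splits p
  have hzero : ∀ a ∈ p.roots, a = 0 := by
    intro a ha
    have hrep : p.roots = Multiset.replicate p.roots.card a :=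
      Multiset.eq_replicate.mpr ⟨rfl, fun b hb => hall b hb a ha⟩
    rw [hsplit.nextCoeff_eq_neg_sum_roots_of_monic hp, hrep, Multiset.sum_replicate,
      neg_eq_zero, smul_eq_zero] at hnext
    exact hnext.resolve_left (Multiset.card_pos_iff_exists_mem.mpr ⟨a, ha⟩).ne'
  refine hX ?_
  rw [hsplit.eq_prod_roots_of_monic hp, Multiset.eq_replicate_card.mpr hzero]
  simp [splits_iff_card_roots.mp hsplit]

theorem Monic.exists_isCoprime_factorization {K : Type*} [Field K] {p : K[X]} (hp : p.Monic)
    {a b : K} (ha : p.IsRoot a) (hb : p.IsRoot b) (hab : a ≠ b) :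
    ∃ f g : K[X], f.Monic ∧ g.Monic ∧ IsCoprime f g ∧ p = f * g ∧
      0 < f.natDegree ∧ 0 < g.natDegree := by
  obtain ⟨g, hpg, hndvd⟩ := exists_eq_pow_rootMultiplicity_mul_and_not_dvd p hp.ne_zero a
  have hf : ((X - C a) ^ p.rootMultiplicity a).Monic := (monic_X_sub_C a).pow _
  have hg : g.Monic := hf.of_mul_monic_left (hpg ▸ hp)
  refine ⟨_, g, hf, hg, ((irreducible_X_sub_C a).coprime_iff_not_dvd.mpr hndvd).pow_left, hpg,
    ?_, ?_⟩
  · rw [(monic_X_sub_C a).natDegree_pow, natDegree_X_sub_C, mul_one]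
    exact (rootMultiplicity_pos hp.ne_zero).mpr ha
  · refine hg.natDegree_pos.mpr fun hg1 => ?_
    rw [hpg, hg1, mul_one, IsRoot, eval_pow, eval_sub, eval_X, eval_C] at hb
    exact hab (sub_eq_zero.mp (eq_zero_of_pow_eq_zero hb)).symm

theorem Monic.exists_scaleRoots_eq {R : Type*} [CommRing R] [Nontrivial R] {P : R[X]}
    (hP : P.Monic) {w : R} (hdvd : ∀ k, w ^ (P.natDegree - k) ∣ P.coeff k) :
    ∃ Q : R[X], Q.Monic ∧ Q.natDegree = P.natDegree ∧ Q.scaleRoots w = P := by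
  choose q hq using hdvd
  set d := P.natDegree
  set Q : R[X] := ∑ k ∈ Finset.range (d + 1), monomial k (q k)
  have hQ : ∀ k, Q.coeff k = if k ≤ d then q k else 0 := fun k => by
    simp [Q, finsetSum_coeff, coeff_monomial]
  have hqd : Q.coeff d = 1 := by
    rw [hQ, if_pos le_rfl, ← hP.coeff_natDegree, hq d, Nat.sub_self, pow_zero, one_mul]
  have hQle : Q.degree ≤ d := (degree_le_iff_coeff_zero _ _).mpr fun k hk => by
    rw [hQ, if_neg (by exact_mod_cast not_le.mpr hk)]
  have hQd : Q.natDegree = d :=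
    natDegree_eq_of_degree_eq_some (degree_eq_of_le_of_coeff_ne_zero hQle (by simp [hqd]))
  refine ⟨Q, monic_of_degree_le d hQle hqd, hQd, ext fun k => ?_⟩
  rw [coeff_scaleRoots, hQd, hQ]
  split_ifs with hk
  · rw [hq k, mul_comm]
  · rw [zero_mul, coeff_eq_zero_of_natDegree_lt (not_le.mp hk)]

section SeriesCoeff

variable {R : Type*} [CommRing R]

/-- The coefficient of `tᴺ` of `P ∈ R⟦t⟧[y]`, viewed as a power series in `t` over `R[y]`. -/
noncomputable def seriesCoeff (N : ℕ) (P : R⟦X⟧[X]) : R[X] :=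
  ∑ k ∈ P.support, monomial k (PowerSeries.coeff N (P.coeff k))

@[simp]
theorem coeff_seriesCoeff (N k : ℕ) (P : R⟦X⟧[X]) :
    (seriesCoeff N P).coeff k = PowerSeries.coeff N (P.coeff k) := by
  simp only [seriesCoeff, finsetSum_coeff, coeff_monomial, Finset.sum_ite_eq', mem_support_iff]
  split_ifs with hk
  · rfl
  · rw [notMem_support_iff.mp hk, map_zero]

theorem seriesCoeff_zero (P : R⟦X⟧[X]) :
    seriesCoeff 0 P = P.map (PowerSeries.constantCoeff (R := R)) := by
  ext k
  simp

theorem seriesCoeff_mul (N : ℕ) (P Q : R⟦X⟧[X]) :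
    seriesCoeff N (P * Q) =
      ∑ i ∈ Finset.range (N + 1), seriesCoeff i P * seriesCoeff (N - i) Q := by
  ext k
  simp only [coeff_seriesCoeff, coeff_mul, map_sum, PowerSeries.coeff_mul, finsetSum_coeff,
    ← Finset.Nat.sum_antidiagonal_eq_sum_range_succ (fun i j => seriesCoeff i P * seriesCoeff j Q)]
  exact Finset.sum_comm

theorem ext_seriesCoeff {P Q : R⟦X⟧[X]} (h : ∀ N, seriesCoeff N P = seriesCoeff N Q) :
    P = Q := by
  ext k N
  simpa using congr_arg (coeff · k) (h N)

theorem Monic.degree_seriesCoeff_lt {P : R⟦X⟧[X]} (hP : P.Monic) {N : ℕ} (hN : N ≠ 0) :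
    (seriesCoeff N P).degree < P.natDegree := by
  refine degree_lt_iff_coeff_zero _ _ |>.mpr fun k hk => ?_
  rw [coeff_seriesCoeff]
  rcases (show P.natDegree ≤ k by exact_mod_cast hk).eq_or_lt with rfl | hlt
  · rw [hP.coeff_natDegree, PowerSeries.coeff_one, if_neg hN]
  · rw [coeff_eq_zero_of_natDegree_lt hlt, map_zero]

noncomputable def ofSeriesCoeff (d : ℕ) (c : ℕ → R[X]) : R⟦X⟧[X] :=
  ∑ k ∈ Finset.range (d + 1), monomial k (PowerSeries.mk fun N => (c N).coeff k)

theorem coeff_ofSeriesCoeff (d : ℕ) (c : ℕ → R[X]) (k : ℕ) :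
    (ofSeriesCoeff d c).coeff k = if k ≤ d then PowerSeries.mk fun N => (c N).coeff k else 0 := by
  simp [ofSeriesCoeff, coeff_monomial]

theorem seriesCoeff_ofSeriesCoeff {d : ℕ} {c : ℕ → R[X]} (hc : ∀ N, (c N).degree ≤ d) (N : ℕ) :
    seriesCoeff N (ofSeriesCoeff d c) = c N := by
  ext k
  rw [coeff_seriesCoeff, coeff_ofSeriesCoeff]
  split_ifs with hk
  · rw [PowerSeries.coeff_mk]
  · rw [map_zero, coeff_eq_zero_of_degree_lt ((hc N).trans_lt (by exact_mod_cast not_le.mp hk))]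

theorem monic_ofSeriesCoeff {d : ℕ} {c : ℕ → R[X]} (hc₀ : (c 0).Monic) (hd : (c 0).natDegree = d)
    (hc : ∀ N ≠ 0, (c N).degree < d) : (ofSeriesCoeff d c).Monic := by
  refine monic_of_degree_le d ((degree_le_iff_coeff_zero _ _).mpr fun k hk => ?_) ?_
  · rw [coeff_ofSeriesCoeff, if_neg (by exact_mod_cast not_le.mpr hk)]
  · rw [coeff_ofSeriesCoeff, if_pos le_rfl]
    ext N
    rw [PowerSeries.coeff_mk, PowerSeries.coeff_one]
    split_ifs with hN
    · rw [hN, ← hd, hc₀.coeff_natDegree]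
    · exact coeff_eq_zero_of_degree_lt (hc N hN)

end SeriesCoeff

section Hensel

variable {R : Type*} [CommRing R]

theorem degree_mul_lt_of_degree_lt_of_degree_le {p q : R[X]} {m n : ℕ} (hp : p.degree < m)
    (hq : q.degree ≤ n) : (p * q).degree < ↑(m + n) := by
  rcases eq_or_ne q 0 with rfl | hq₀
  · simp
  rw [Nat.cast_add]
  exact (degree_mul_le _ _).trans_lt
    (WithBot.add_lt_add_of_lt_of_le (degree_ne_bot.mpr hq₀) hp hq)

variable (f₀ g₀ a b : R[X])

noncomputable def coprimeSolve (w : R[X]) : R[X] × R[X] :=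
  ((b * w) %ₘ f₀, a * w + g₀ * ((b * w) /ₘ f₀))

variable {f₀ g₀ a b}

theorem coprimeSolve_spec (hab : a * f₀ + b * g₀ = 1) (w : R[X]) :
    g₀ * (coprimeSolve f₀ g₀ a b w).1 + f₀ * (coprimeSolve f₀ g₀ a b w).2 = w := by
  have h := modByMonic_add_div (b * w) f₀
  simp only [coprimeSolve]
  linear_combination g₀ * h + w * hab

variable (f₀ g₀ a b) in
/-- The `t`-adic coefficients `(Fₙ, Gₙ)` of the two Hensel factors of `h`: for `n ≥ 1`, the
correction `Fₙ g₀ + f₀ Gₙ` makes the coefficient of `tⁿ` in `F G` equal to that of `h`. -/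
noncomputable def henselCoeff (h : R⟦X⟧[X]) : ℕ → R[X] × R[X]
  | 0 => (f₀, g₀)
  | N + 1 => coprimeSolve f₀ g₀ a b (seriesCoeff (N + 1) h - ∑ i ∈ (Finset.range N).attach,
      (henselCoeff h (i.1 + 1)).1 * (henselCoeff h (N - i.1)).2)
  decreasing_by all_goals have := Finset.mem_range.mp i.2; omega

variable {h : R⟦X⟧[X]}

@[simp]
theorem henselCoeff_zero : henselCoeff f₀ g₀ a b h 0 = (f₀, g₀) := by
  rw [henselCoeff]

theorem sum_henselCoeff_mul (hab : a * f₀ + b * g₀ = 1) (hred : seriesCoeff 0 h = f₀ * g₀)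
    (N : ℕ) : ∑ i ∈ Finset.range (N + 1),
      (henselCoeff f₀ g₀ a b h i).1 * (henselCoeff f₀ g₀ a b h (N - i)).2 = seriesCoeff N h := by
  cases N with
  | zero => simp [hred]
  | succ N =>
    rw [Finset.sum_range_succ, Finset.sum_range_succ', Nat.sub_self, Nat.sub_zero,
      ← Finset.sum_attach (Finset.range N)]
    simp only [Nat.add_sub_add_right]
    rw [henselCoeff, henselCoeff]
    linear_combination coprimeSolve_spec hab (seriesCoeff (N + 1) h -
      ∑ i ∈ (Finset.range N).attach,
        (henselCoeff f₀ g₀ a b h (i.1 + 1)).1 * (henselCoeff f₀ g₀ a b h (N - i.1)).2)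

variable [Nontrivial R]

theorem degree_coprimeSolve_fst_lt (hf₀ : f₀.Monic) (w : R[X]) :
    (coprimeSolve f₀ g₀ a b w).1.degree < f₀.degree :=
  degree_modByMonic_lt _ hf₀

theorem degree_coprimeSolve_snd_lt (hf₀ : f₀.Monic) (hg₀ : g₀.Monic) (hab : a * f₀ + b * g₀ = 1)
    {w : R[X]} (hw : w.degree < ↑(f₀.natDegree + g₀.natDegree)) :
    (coprimeSolve f₀ g₀ a b w).2.degree < g₀.degree := by
  set u := (coprimeSolve f₀ g₀ a b w).1
  set v := (coprimeSolve f₀ g₀ a b w).2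
  have hfv : f₀ * v = w - g₀ * u := by linear_combination coprimeSolve_spec hab w
  have hgu : (u * g₀).degree < ↑(f₀.natDegree + g₀.natDegree) :=
    degree_mul_lt_of_degree_lt_of_degree_le (degree_eq_natDegree hf₀.ne_zero ▸
      degree_coprimeSolve_fst_lt hf₀ w) degree_le_natDegree
  have hlt : (f₀ * v).degree < ↑(f₀.natDegree + g₀.natDegree) := by
    rw [hfv, mul_comm]
    exact (degree_sub_le _ _).trans_lt (max_lt hw hgu)
  rw [mul_comm, hf₀.degree_mul, degree_eq_natDegree hf₀.ne_zero, Nat.cast_add,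
    add_comm (f₀.natDegree : WithBot ℕ)] at hlt
  rw [degree_eq_natDegree hg₀.ne_zero]
  exact (WithBot.add_lt_add_iff_right WithBot.coe_ne_bot).mp hlt

theorem degree_henselCoeff_fst_lt (hf₀ : f₀.Monic) {N : ℕ} (hN : N ≠ 0) :
    (henselCoeff f₀ g₀ a b h N).1.degree < f₀.natDegree := by
  obtain ⟨N, rfl⟩ := Nat.exists_eq_succ_of_ne_zero hN
  rw [henselCoeff, ← degree_eq_natDegree hf₀.ne_zero]
  exact degree_coprimeSolve_fst_lt hf₀ _

theorem degree_henselCoeff_snd_lt (hm : h.Monic) (hf₀ : f₀.Monic) (hg₀ : g₀.Monic)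
    (hab : a * f₀ + b * g₀ = 1) (hdeg : h.natDegree = f₀.natDegree + g₀.natDegree) {N : ℕ}
    (hN : N ≠ 0) : (henselCoeff f₀ g₀ a b h N).2.degree < g₀.natDegree := by
  induction N using Nat.strong_induction_on with
  | _ N ih =>
    obtain ⟨N, rfl⟩ := Nat.exists_eq_succ_of_ne_zero hN
    rw [henselCoeff, ← degree_eq_natDegree hg₀.ne_zero]
    refine degree_coprimeSolve_snd_lt hf₀ hg₀ hab ((degree_sub_le _ _).trans_lt (max_lt ?_ ?_))
    · exact hdeg ▸ hm.degree_seriesCoeff_lt N.succ_ne_zero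
    · refine (degree_sum_le _ _).trans_lt
        ((Finset.sup_lt_iff (WithBot.bot_lt_coe _)).mpr fun i _ => ?_)
      have hi := Finset.mem_range.mp i.2
      exact degree_mul_lt_of_degree_lt_of_degree_le
        (degree_henselCoeff_fst_lt hf₀ i.1.succ_ne_zero) (ih (N - i) (by omega) (by omega)).le

theorem Monic.exists_factorization_lift (hm : h.Monic) (hf₀ : f₀.Monic) (hg₀ : g₀.Monic)
    (hcop : IsCoprime f₀ g₀) (hred : h.map (PowerSeries.constantCoeff (R := R)) = f₀ * g₀) :
    ∃ f g : R⟦X⟧[X], f.Monic ∧ g.Monic ∧ f.map (PowerSeries.constantCoeff (R := R)) = f₀ ∧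
      g.map (PowerSeries.constantCoeff (R := R)) = g₀ ∧ h = f * g := by
  obtain ⟨a, b, hab⟩ := hcop
  have hdeg : h.natDegree = f₀.natDegree + g₀.natDegree := by
    rw [← hm.natDegree_map (PowerSeries.constantCoeff (R := R)), hred, hf₀.natDegree_mul hg₀]
  rw [← seriesCoeff_zero] at hred
  set c := henselCoeff f₀ g₀ a b h
  have hc₀ : c 0 = (f₀, g₀) := henselCoeff_zero
  have hF : ∀ N, (c N).1.degree ≤ f₀.natDegree := fun N => by
    rcases eq_or_ne N 0 with rfl | hN
    · exact hc₀ ▸ degree_le_natDegree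
    · exact (degree_henselCoeff_fst_lt hf₀ hN).le
  have hG : ∀ N, (c N).2.degree ≤ g₀.natDegree := fun N => by
    rcases eq_or_ne N 0 with rfl | hN
    · exact hc₀ ▸ degree_le_natDegree
    · exact (degree_henselCoeff_snd_lt hm hf₀ hg₀ hab hdeg hN).le
  refine ⟨ofSeriesCoeff f₀.natDegree (fun N => (c N).1),
    ofSeriesCoeff g₀.natDegree (fun N => (c N).2),
    monic_ofSeriesCoeff (hc₀ ▸ hf₀) (by rw [hc₀]) fun N hN => degree_henselCoeff_fst_lt hf₀ hN,
    monic_ofSeriesCoeff (hc₀ ▸ hg₀) (by rw [hc₀]) fun N hN =>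
      degree_henselCoeff_snd_lt hm hf₀ hg₀ hab hdeg hN,
    ?_, ?_, ext_seriesCoeff fun N => ?_⟩
  · rw [← seriesCoeff_zero, seriesCoeff_ofSeriesCoeff hF, hc₀]
  · rw [← seriesCoeff_zero, seriesCoeff_ofSeriesCoeff hG, hc₀]
  · rw [seriesCoeff_mul, ← sum_henselCoeff_mul hab hred N]
    simp only [seriesCoeff_ofSeriesCoeff hF, seriesCoeff_ofSeriesCoeff hG, c]

end Hensel

section SplitsAfterExpand

variable {R : Type*} [CommRing R]

def SplitsAfterExpand (P : R⟦X⟧[X]) : Prop :=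
  ∃ (n : ℕ) (hn : n ≠ 0), (P.map (PowerSeries.expand n hn).toRingHom).Splits

theorem map_expand_mul (P : R⟦X⟧[X]) {m n : ℕ} (hm : m ≠ 0) (hn : n ≠ 0) :
    P.map (PowerSeries.expand (m * n) (mul_ne_zero hm hn)).toRingHom =
      (P.map (PowerSeries.expand n hn).toRingHom).map
        (PowerSeries.expand m hm).toRingHom := by
  rw [PowerSeries.expand_mul_eq_comp m hm n hn, map_map]
  rfl

theorem Splits.map_expand_of_dvd {P : R⟦X⟧[X]} {n N : ℕ} (hn : n ≠ 0) (hN : N ≠ 0) (hdvd : n ∣ N)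
    (hP : (P.map (PowerSeries.expand n hn).toRingHom).Splits) :
    (P.map (PowerSeries.expand N hN).toRingHom).Splits := by
  obtain ⟨m, rfl⟩ := exists_eq_mul_left_of_dvd hdvd
  rw [map_expand_mul P (left_ne_zero_of_mul hN) hn]
  exact hP.map _

theorem Splits.splitsAfterExpand {P : R⟦X⟧[X]} (hP : P.Splits) : SplitsAfterExpand P :=
  ⟨1, one_ne_zero, by simpa using hP⟩

theorem SplitsAfterExpand.of_map_expand {P : R⟦X⟧[X]} {s : ℕ} (hs : s ≠ 0)
    (hP : SplitsAfterExpand (P.map (PowerSeries.expand s hs).toRingHom)) :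
    SplitsAfterExpand P := by
  obtain ⟨n, hn, hsplit⟩ := hP
  exact ⟨n * s, mul_ne_zero hn hs, map_expand_mul P hn hs ▸ hsplit⟩

theorem SplitsAfterExpand.mul {P Q : R⟦X⟧[X]} (hP : SplitsAfterExpand P)
    (hQ : SplitsAfterExpand Q) : SplitsAfterExpand (P * Q) := by
  obtain ⟨m, hm, hPm⟩ := hP
  obtain ⟨n, hn, hQn⟩ := hQ
  refine ⟨m * n, mul_ne_zero hm hn, ?_⟩
  rw [Polynomial.map_mul]
  exact (hPm.map_expand_of_dvd hm _ (dvd_mul_right m n)).mul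
    (hQn.map_expand_of_dvd hn _ (dvd_mul_left n m))

theorem SplitsAfterExpand.of_taylor {P : R⟦X⟧[X]} (c : R⟦X⟧)
    (hP : SplitsAfterExpand (taylor c P)) : SplitsAfterExpand P := by
  obtain ⟨n, hn, hsplit⟩ := hP
  refine ⟨n, hn, ?_⟩
  have := hsplit.taylor ((PowerSeries.expand n hn).toRingHom (-c))
  rwa [← map_taylor, taylor_taylor, neg_add_cancel, taylor_zero] at this

theorem SplitsAfterExpand.scaleRoots [Nontrivial R] {P : R⟦X⟧[X]} (hP : SplitsAfterExpand P)
    (hm : P.Monic) (w : R⟦X⟧) : SplitsAfterExpand (P.scaleRoots w) := by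
  obtain ⟨n, hn, hsplit⟩ := hP
  refine ⟨n, hn, ?_⟩
  rw [map_scaleRoots _ _ _ (by simp [hm.leadingCoeff])]
  exact hsplit.scaleRoots _

end SplitsAfterExpand

theorem Monic.exists_map_expand_eq_scaleRoots {R : Type*} [CommRing R] [IsDomain R]
    {P : R⟦X⟧[X]} (hP : P.Monic) (hnext : P.nextCoeff = 0) (hX : P ≠ X ^ P.natDegree) :
    ∃ (s : ℕ) (hs : s ≠ 0) (r : ℕ) (Q : R⟦X⟧[X]), Q.Monic ∧ Q.natDegree = P.natDegree ∧
      Q.nextCoeff = 0 ∧ Q.map (PowerSeries.constantCoeff (R := R)) ≠ X ^ P.natDegree ∧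
      P.map (PowerSeries.expand s hs).toRingHom = Q.scaleRoots (PowerSeries.X ^ r) := by
  set d := P.natDegree
  have hlow : ∃ k < d, (P.coeff k).order ≠ ⊤ := by
    by_contra! hall
    refine hX (ext fun k => ?_)
    rw [coeff_X_pow]
    rcases lt_trichotomy k d with hk | rfl | hk
    · rw [if_neg hk.ne, ← PowerSeries.order_eq_top, hall k hk]
    · rw [if_pos rfl, hP.coeff_natDegree]
    · rw [if_neg hk.ne', coeff_eq_zero_of_natDegree_lt hk]
  -- `r / (d - k₀)` is the least slope of the Newton polygon, so after `t ↦ t^(d - k₀)` every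
  -- `Pₖ` is divisible by `t^(r (d - k))`, with equality of orders at `k₀`.
  obtain ⟨k₀, hk₀, r, hr, hslope⟩ := exists_min_slope (fun k => (P.coeff k).order) hlow
  have hs : d - k₀ ≠ 0 := by omega
  have hdvd : ∀ k, (PowerSeries.X ^ r : R⟦X⟧) ^
      ((P.map (PowerSeries.expand _ hs).toRingHom).natDegree - k) ∣
        (P.map (PowerSeries.expand _ hs).toRingHom).coeff k := by
    intro k
    rw [hP.natDegree_map, coeff_map, ← pow_mul, PowerSeries.X_pow_dvd_iff_le_order]
    simp only [AlgHom.toRingHom_eq_coe, RingHom.coe_coe, PowerSeries.order_expand, nsmul_eq_mul]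
    rcases lt_or_ge k d with hk | hk
    · exact hslope k hk
    · rw [Nat.sub_eq_zero_of_le hk, mul_zero, Nat.cast_zero]
      exact zero_le
  obtain ⟨Q, hQm, hQd, hQ⟩ := (hP.map _).exists_scaleRoots_eq hdvd
  rw [hP.natDegree_map] at hQd
  have hcoeff : ∀ k, Q.coeff k * (PowerSeries.X ^ r) ^ (d - k) =
      PowerSeries.expand _ hs (P.coeff k) := fun k => by
    simpa [coeff_scaleRoots, hQd] using congr_arg (coeff · k) hQ
  refine ⟨_, hs, r, Q, hQm, hQd, ?_, fun hQX => ?_, hQ.symm⟩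
  · rw [nextCoeff_of_natDegree_pos (by omega), hQd]
    have h := hcoeff (d - 1)
    rw [← nextCoeff_of_natDegree_pos (by omega), hnext, map_zero] at h
    exact (mul_eq_zero.mp h).resolve_right (pow_ne_zero _ (pow_ne_zero _ PowerSeries.X_ne_zero))
  · have hconst : PowerSeries.constantCoeff (Q.coeff k₀) = 0 := by
      simpa [coeff_X_pow, hk₀.ne] using congr_arg (coeff · k₀) hQX
    have horder := congr_arg PowerSeries.order (hcoeff k₀)
    rw [PowerSeries.order_mul, ← pow_mul, PowerSeries.order_X_pow, PowerSeries.order_expand, hr]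
      at horder
    rw [nsmul_eq_mul, ← Nat.cast_mul, mul_comm (d - k₀), add_comm] at horder
    have h := add_le_add_right (PowerSeries.one_le_order_iff_constCoeff_eq_zero.mpr hconst)
      ((r * (d - k₀) : ℕ) : ℕ∞)
    rw [horder] at h
    norm_cast at h
    omega

variable {K : Type*} [Field K]

theorem Monic.splitsAfterExpand_of_mem_roots_ne {P : K⟦X⟧[X]} (hP : P.Monic)
    (ih : ∀ Q : K⟦X⟧[X], Q.Monic → Q.natDegree < P.natDegree → SplitsAfterExpand Q) {a b : K}
    (ha : a ∈ (P.map (PowerSeries.constantCoeff (R := K))).roots)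
    (hb : b ∈ (P.map (PowerSeries.constantCoeff (R := K))).roots) (hab : a ≠ b) :
    SplitsAfterExpand P := by
  obtain ⟨f₀, g₀, hf₀, hg₀, hcop, hfg₀, hf₀pos, hg₀pos⟩ :=
    (hP.map _).exists_isCoprime_factorization (isRoot_of_mem_roots ha) (isRoot_of_mem_roots hb)
      hab
  obtain ⟨f, g, hf, hg, rfl, rfl, rfl⟩ := hP.exists_factorization_lift hf₀ hg₀ hcop hfg₀
  rw [hf.natDegree_map] at hf₀pos
  rw [hg.natDegree_map] at hg₀pos
  have hdeg := hf.natDegree_mul hg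
  exact (ih f hf (by omega)).mul (ih g hg (by omega))

theorem Monic.splitsAfterExpand [IsAlgClosed K] [CharZero K] {P : K⟦X⟧[X]} (hP : P.Monic) :
    SplitsAfterExpand P := by
  induction hd : P.natDegree using Nat.strong_induction_on generalizing P with
  | _ d ih =>
    obtain ⟨c, hc⟩ := hP.exists_nextCoeff_taylor_eq_zero
    have hPc : (taylor c P).Monic := by rw [taylor_apply]; exact hP.comp_X_add_C c
    refine SplitsAfterExpand.of_taylor c ?_
    by_cases hX : taylor c P = X ^ (taylor c P).natDegree
    · rw [hX]
      exact (Splits.X_pow _).splitsAfterExpand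
    obtain ⟨s, hs, r, Q, hQ, hQd, hQnext, hQX, hPQ⟩ := hPc.exists_map_expand_eq_scaleRoots hc hX
    refine SplitsAfterExpand.of_map_expand hs (hPQ ▸ SplitsAfterExpand.scaleRoots ?_ hQ _)
    obtain ⟨a, ha, b, hb, hab⟩ :=
      (hQ.map (PowerSeries.constantCoeff (R := K))).exists_mem_roots_ne_of_nextCoeff_eq_zero
      (by rw [nextCoeff_map_of_leadingCoeff_ne_zero _ (by simp [hQ.leadingCoeff]), hQnext,
        map_zero])
      (by rwa [hQ.natDegree_map, hQd])
    rw [natDegree_taylor, hd] at hQd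
    exact hQ.splitsAfterExpand_of_mem_roots_ne (fun Q' hQ' hlt => ih _ (hQd ▸ hlt) hQ' rfl)
      ha hb hab

end Polynomial

/-- Newton–Puiseux: for a monic polynomial
`h = yᵈ + h₁(x)y^{d−1} + ⋯ + h_d(x)` over `ℂ[[x]]` there exist `n ≥ 1` and power series
`σ₁, …, σ_d ∈ ℂ[[t]]` with `h(tⁿ, y) = (y − σ₁(t)) ⋯ (y − σ_d(t))`. -/
theorem stmt4 (d : ℕ) (h : Polynomial (PowerSeries ℂ)) (hmonic : h.Monic)
    (hdeg : h.natDegree = d) :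
    ∃ n : ℕ, 0 < n ∧ ∃ σ : Fin d → PowerSeries ℂ,
      substPowPoly n h = ∏ i : Fin d, (Polynomial.X - Polynomial.C (σ i)) := by
  obtain ⟨n, hn, hsplit⟩ := hmonic.splitsAfterExpand
  obtain ⟨σ, hσ⟩ := hsplit.exists_eq_prod_fin (hmonic.map _) (by rw [hmonic.natDegree_map, hdeg])
  exact ⟨n, Nat.pos_of_ne_zero hn, σ, (substPowPoly_eq_map_expand hn h).trans hσ⟩
end

section
/- Let h(x,y) ∈ ℂ[[x]][y] be monic in y of degree d, let N be a positive integer and σ₁, …, σ_d ∈ ℂ[[t]] convergent series such that h(t^N, y) = ∏_{i=1}^d (y − σ_i(t)). Then the zero set X = {(x,y) ∈ ℂ² near 0 : h(x,y) = 0} equals the union ⋃_{i=1}^d {(z^N, σ_i(z)) : z ∈ ℂ, |z| small}. -/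
/-- Let `h(x,y) = Σ_{k≤d} a_k(x) yᵏ` be monic in `y` of degree `d` with
coefficients `a_k` holomorphic near `0`, and suppose `σ₁, …, σ_d` are holomorphic near `0` with
`h(t^N, y) = ∏ᵢ (y − σᵢ(t))` near `t = 0`.  Then near the origin the zero set
`X = {(x,y) : h(x,y) = 0}` equals `⋃ᵢ {(z^N, σᵢ(z)) : z small}`. -/
theorem stmt12 (d N : ℕ) (hN : 0 < N) (a : ℕ → ℂ → ℂ) (σ : Fin d → ℂ → ℂ)
    (ha : ∀ k, AnalyticAt ℂ (a k) 0) (hσ : ∀ i, AnalyticAt ℂ (σ i) 0)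
    (hmonic : ∀ x : ℂ, a d x = 1)
    (hfact : ∃ δ₀ > 0, ∀ t : ℂ, ‖t‖ < δ₀ → ∀ y : ℂ,
      ∑ k ∈ Finset.range (d + 1), a k (t ^ N) * y ^ k = ∏ i : Fin d, (y - σ i t)) :
    ∃ δ > 0,
      {p : ℂ × ℂ | ‖p.1‖ < δ ^ N ∧ ∑ k ∈ Finset.range (d + 1), a k p.1 * p.2 ^ k = 0} =
      {p : ℂ × ℂ | ∃ i : Fin d, ∃ z : ℂ, ‖z‖ < δ ∧ p = (z ^ N, σ i z)} := by
  obtain ⟨δ₀, hδ₀, hf⟩ := hfact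
  refine ⟨δ₀, hδ₀, ?_⟩
  ext ⟨x, y⟩
  simp only [Set.mem_setOf_eq]
  constructor
  · rintro ⟨hx, hsum⟩
    obtain ⟨z, hz⟩ := IsAlgClosed.exists_pow_nat_eq x hN
    have hzn : ‖z‖ < δ₀ := by
      have h1 : ‖z‖ ^ N < δ₀ ^ N := by rw [← norm_pow, hz]; exact hx
      exact lt_of_pow_lt_pow_left₀ N hδ₀.le h1
    have h2 := hf z hzn y
    rw [hz] at h2
    rw [h2] at hsum
    obtain ⟨i, -, hi⟩ := Finset.prod_eq_zero_iff.mp hsum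
    exact ⟨i, z, hzn, by rw [← hz, sub_eq_zero.mp hi]⟩
  · rintro ⟨i, z, hzn, heq⟩
    obtain ⟨rfl, rfl⟩ := Prod.ext_iff.mp heq
    refine ⟨by simpa [norm_pow] using pow_lt_pow_left₀ hzn (norm_nonneg z) hN.ne', ?_⟩
    rw [hf z hzn (σ i z)]
    exact Finset.prod_eq_zero (Finset.mem_univ i) (sub_self _)
end

section
/- Let f = yᵈ + c₂(x)y^{d−2} + ⋯ + c_d(x) ∈ ℂ[[x]][y] be monic with zero coefficient of y^{d−1}, d ≥ 2, and not equal to yᵈ. For 2 ≤ i ≤ d, let u_i be the x-adic order of c_i(x), and let r be the least index achieving min{u_i/i}. Then the polynomial F' = yᵈ + Σ_{k=2}^{d} x^{−k u_r} c_k(x^r) y^{d−k} has coefficients of nonnegative order, so F' ∈ ℂ[[x]][y], and its reduction F'(0,y) ∈ ℂ[y] has at least two distinct roots. -/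
open Polynomial PowerSeries

/-- Newton polygon step: let `f = yᵈ + c₂(x)y^{d−2} + ⋯ + c_d(x)` be monic with
vanishing `y^{d−1}` coefficient, `d ≥ 2`, `f ≠ yᵈ`.  With `uᵢ` the `x`-adic order of `cᵢ` and
`r` the least index achieving `min uᵢ/i`, the polynomial
`F' = yᵈ + Σ_k x^{−k u_r} c_k(x^r) y^{d−k}` has coefficients of nonnegative order (i.e.
`x^{k u_r}` divides `c_k(x^r)`), and its reduction `F'(0,y)` has at least two distinct
roots. -/
theorem stmt14 (d : ℕ) (hd : 2 ≤ d) (c : ℕ → PowerSeries ℂ) (u : ℕ → ℕ) (r : ℕ)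
    (hr2 : 2 ≤ r) (hrd : r ≤ d) (hcr : c r ≠ 0)
    (hord : ∀ i, 2 ≤ i → i ≤ d → c i ≠ 0 → (c i).order = (u i : ℕ∞))
    (hmin : ∀ i, 2 ≤ i → i ≤ d → c i ≠ 0 → (u r : ℚ) / (r : ℚ) ≤ (u i : ℚ) / (i : ℚ))
    (hleast : ∀ i, 2 ≤ i → i < r → c i ≠ 0 → (u r : ℚ) / (r : ℚ) < (u i : ℚ) / (i : ℚ)) :
    (∀ k, 2 ≤ k → k ≤ d → (PowerSeries.X : PowerSeries ℂ) ^ (k * u r) ∣ substPow r (c k)) ∧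
    (∃ z w : ℂ, z ≠ w ∧
      (Polynomial.X ^ d + ∑ k ∈ Finset.Icc 2 d,
        Polynomial.C (PowerSeries.coeff (k * u r) (substPow r (c k))) *
          Polynomial.X ^ (d - k) : Polynomial ℂ).IsRoot z ∧
      (Polynomial.X ^ d + ∑ k ∈ Finset.Icc 2 d,
        Polynomial.C (PowerSeries.coeff (k * u r) (substPow r (c k))) *
          Polynomial.X ^ (d - k) : Polynomial ℂ).IsRoot w) := by
  have hr0 : 0 < r := by omega
  constructor
  · intro k hk2 hkd
    rw [PowerSeries.X_pow_dvd_iff]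
    intro m hm
    by_cases hck : c k = 0
    · simp [substPow, hck]
    · simp only [substPow, PowerSeries.coeff_mk]
      split_ifs with hdvd
      · obtain ⟨q, rfl⟩ := hdvd
        rw [Nat.mul_div_cancel_left q hr0]
        have hcross : k * u r ≤ r * u k := by
          have h := hmin k hk2 hkd hck
          rw [div_le_div_iff₀ (by positivity) (by positivity : (0:ℚ) < (k:ℚ))] at h
          have : (u r : ℚ) * k ≤ (u k : ℚ) * r := h
          have h2 : u r * k ≤ u k * r := by exact_mod_cast this
          calc k * u r = u r * k := mul_comm _ _
            _ ≤ u k * r := h2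
            _ = r * u k := mul_comm _ _
        have hq : q < u k := by
          by_contra hq
          push_neg at hq
          have : r * u k ≤ r * q := Nat.mul_le_mul_left r hq
          omega
        have hlt : (q : ℕ∞) < (c k).order := by
          rw [hord k hk2 hkd hck]
          exact_mod_cast hq
        exact PowerSeries.coeff_of_lt_order q hlt
      · rfl
  · set a : ℕ → ℂ := fun k => PowerSeries.coeff (k * u r) (substPow r (c k)) with ha
    set S : Polynomial ℂ := ∑ k ∈ Finset.Icc 2 d, Polynomial.C (a k) * Polynomial.X ^ (d - k)
      with hS
    set P : Polynomial ℂ := Polynomial.X ^ d + S with hP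
    have har : a r ≠ 0 := by
      have hdvd : r ∣ r * u r := dvd_mul_right r (u r)
      have : a r = PowerSeries.coeff (u r) (c r) := by
        simp [ha, substPow, hdvd, Nat.mul_div_cancel_left _ hr0]
      rw [this]
      exact (PowerSeries.order_eq_nat.mp (hord r hr2 hrd hcr)).1
    have hdegS : S.degree < (d : WithBot ℕ) := by
      refine lt_of_le_of_lt (Polynomial.degree_sum_le _ _) ?_
      refine (Finset.sup_lt_iff (WithBot.bot_lt_coe d)).mpr ?_
      intro k hk
      refine lt_of_le_of_lt (Polynomial.degree_C_mul_X_pow_le _ _) ?_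
      simp only [Finset.mem_Icc] at hk
      exact Nat.cast_lt.mpr (by omega)
    have hmon : P.Monic := Polynomial.monic_X_pow_add hdegS
    have hdegP : P.natDegree = d := by
      have : P.degree = d := by
        rw [hP, Polynomial.degree_add_eq_left_of_degree_lt
          (by rwa [Polynomial.degree_X_pow])]
        exact Polynomial.degree_X_pow d
      exact Polynomial.natDegree_eq_of_degree_eq_some this
    have hP1 : P.coeff (d - 1) = 0 := by
      rw [hP, Polynomial.coeff_add, Polynomial.coeff_X_pow, if_neg (by omega), hS,
        Polynomial.finset_sum_coeff]
      rw [Finset.sum_eq_zero]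
      · ring
      intro k hk
      simp only [Finset.mem_Icc] at hk
      rw [Polynomial.coeff_C_mul, Polynomial.coeff_X_pow, if_neg (by omega), mul_zero]
    have hPr : P.coeff (d - r) = a r := by
      rw [hP, Polynomial.coeff_add, Polynomial.coeff_X_pow, if_neg (by omega), hS,
        Polynomial.finset_sum_coeff, Finset.sum_eq_single r]
      · simp
      · intro k hk hne
        simp only [Finset.mem_Icc] at hk
        rw [Polynomial.coeff_C_mul, Polynomial.coeff_X_pow, if_neg (by omega), mul_zero]
      · intro h
        exact absurd (Finset.mem_Icc.mpr ⟨hr2, hrd⟩) h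
    by_contra hcon
    push_neg at hcon
    obtain ⟨z, hz⟩ := Complex.exists_root (f := P) (by rw [Polynomial.degree_eq_natDegree hmon.ne_zero, hdegP]; exact_mod_cast (by omega : 0 < d))
    have hall : ∀ w, P.IsRoot w → w = z := by
      intro w hw
      by_contra hne
      exact hcon z w (Ne.symm hne) hz hw
    have hsplits : P.Splits := IsAlgClosed.splits P
    have hcard : Multiset.card P.roots = d := by
      rw [Polynomial.splits_iff_card_roots.mp hsplits, hdegP]
    have hroots : P.roots = Multiset.replicate d z := by
      rw [Multiset.eq_replicate]
      exact ⟨hcard, fun b hb => hall b (Polynomial.isRoot_of_mem_roots hb)⟩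
    have hPeq : P = (Polynomial.X + Polynomial.C (-z)) ^ d := by
      have := hsplits.eq_prod_roots_of_monic hmon
      rw [hroots, Multiset.map_replicate, Multiset.prod_replicate] at this
      rw [this, Polynomial.C_neg, sub_eq_add_neg]
    have hz0 : z = 0 := by
      have := hP1
      rw [hPeq, Polynomial.coeff_X_add_C_pow] at this
      have h1 : d - (d - 1) = 1 := by omega
      rw [h1, Nat.choose_symm (by omega : 1 ≤ d)] at this
      simp only [pow_one, Nat.choose_one_right] at this
      have hd0 : (d : ℂ) ≠ 0 := by exact_mod_cast (by omega : d ≠ 0)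
      rcases mul_eq_zero.mp this with h | h
      · exact neg_eq_zero.mp h
      · exact absurd h hd0
    rw [hz0] at hPeq
    simp only [neg_zero, map_zero, add_zero] at hPeq
    rw [hPeq, Polynomial.coeff_X_pow, if_neg (by omega)] at hPr
    exact har hPr.symm
end
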